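/- Let k : ℝ → ℝ be twice differentiable, convex and non-decreasing on (0,∞) (so k' ≥ 0 and k'' ≥ 0 on (0,∞)). Let λ_1,…,λ_n > 0 be pairwise distinct and ξ_1,…,ξ_n ∈ ℂ. Then Σ_a 2λ_a(λ_a·k''(λ_a) + k'(λ_a))·|ξ_a|⁴ + Σ_{a≠b} (λ_b·(k'(λ_a) − k'(λ_b))/(λ_a − λ_b) + k'(λ_a)) · ((λ_a+λ_b)/2 · |ξ_a|²|ξ_b|² + √(λ_a λ_b) · Re(ξ_a² · conj(ξ_b)²)) ≥ 0. -/

import Mathlib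

/-!
The sum is nonnegative term by term. Monotonicity of `k'` (from `k'' ≥ 0`) makes every divided
difference of `k'` nonnegative (also the junk value `0 / 0 = 0` when two `λ` coincide), hence every coefficient `λ_b (k'(λ_a) - k'(λ_b))/(λ_a - λ_b) + k'(λ_a)`
nonnegative; and since `√(λ_a λ_b) ≤ (λ_a + λ_b)/2` by AM-GM while
`Re(ξ_a² conj ξ_b²) ≥ -|ξ_a|²|ξ_b|²`, each off-diagonal bracket is nonnegative.
-/

lemma monotoneOn_of_hasDerivAt_nonneg_of_isOpen {D : Set ℝ} (hD : Convex ℝ D) (hDo : IsOpen D)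
    {f f' : ℝ → ℝ} (hf : ∀ x ∈ D, HasDerivAt f (f' x) x) (hf' : ∀ x ∈ D, 0 ≤ f' x) :
    MonotoneOn f D := by
  refine monotoneOn_of_hasDerivWithinAt_nonneg (f' := f') hD
    (fun x hx ↦ (hf x hx).continuousAt.continuousWithinAt) (fun x hx ↦ ?_) (fun x hx ↦ ?_)
  · rw [hDo.interior_eq] at hx ⊢
    exact (hf x hx).hasDerivWithinAt
  · exact hf' x (interior_subset hx)

lemma MonotoneOn.mul_divDiff_add_nonneg {s : Set ℝ} {f : ℝ → ℝ} (hf : MonotoneOn f s) {x y : ℝ}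
    (hx : x ∈ s) (hy : y ∈ s) (hy₀ : 0 ≤ y) (hfx : 0 ≤ f x) :
    0 ≤ y * ((f x - f y) / (x - y)) + f x := by
  have hslope : 0 ≤ (f x - f y) / (x - y) := by
    simpa [slope_def_field] using hf.slope_nonneg hy hx
  positivity

lemma Real.sqrt_mul_le_add_div_two {x y : ℝ} (hx : 0 ≤ x) (hy : 0 ≤ y) :
    √(x * y) ≤ (x + y) / 2 :=
  Real.sqrt_le_iff.mpr ⟨by positivity, by nlinarith [four_mul_le_sq_add x y]⟩

lemma Complex.neg_norm_sq_mul_norm_sq_le_re (z w : ℂ) :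
    -(‖z‖ ^ 2 * ‖w‖ ^ 2) ≤ (z ^ 2 * starRingEnd ℂ w ^ 2).re := by
  have h := (abs_le.mp (abs_re_le_norm (z ^ 2 * starRingEnd ℂ w ^ 2))).1
  rwa [norm_mul, norm_pow, norm_pow, Complex.norm_conj] at h

lemma Complex.mul_norm_sq_mul_norm_sq_add_mul_re_nonneg {s m : ℝ} (hs : 0 ≤ s) (hsm : s ≤ m)
    (z w : ℂ) : 0 ≤ m * (‖z‖ ^ 2 * ‖w‖ ^ 2) + s * (z ^ 2 * starRingEnd ℂ w ^ 2).re := by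
  have hre := neg_norm_sq_mul_norm_sq_le_re z w
  have hAB : 0 ≤ ‖z‖ ^ 2 * ‖w‖ ^ 2 := by positivity
  nlinarith [mul_nonneg (sub_nonneg.mpr hsm) hAB, mul_nonneg hs (neg_le_iff_add_nonneg.mp hre)]

theorem symbol_correction_nonneg_general (k' k'' : ℝ → ℝ)
    (hd2 : ∀ x ∈ Set.Ioi (0:ℝ), HasDerivAt k' (k'' x) x)
    (hk'nonneg : ∀ x ∈ Set.Ioi (0:ℝ), 0 ≤ k' x)
    (hk''nonneg : ∀ x ∈ Set.Ioi (0:ℝ), 0 ≤ k'' x)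
    (n : ℕ) (lam : Fin n → ℝ) (hpos : ∀ a, 0 < lam a)
    (xi : Fin n → ℂ) :
    0 ≤ (∑ a, 2 * lam a * (lam a * k'' (lam a) + k' (lam a)) * ‖xi a‖ ^ 4)
      + ∑ a, ∑ b, (if a ≠ b then
          (lam b * ((k' (lam a) - k' (lam b)) / (lam a - lam b)) + k' (lam a))
            * ((lam a + lam b) / 2 * (‖xi a‖ ^ 2 * ‖xi b‖ ^ 2)
              + Real.sqrt (lam a * lam b) * ((xi a) ^ 2 * (starRingEnd ℂ (xi b)) ^ 2).re)
        else 0) := by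
  have hk'mono : MonotoneOn k' (Set.Ioi 0) :=
    monotoneOn_of_hasDerivAt_nonneg_of_isOpen (convex_Ioi 0) isOpen_Ioi hd2 hk''nonneg
  refine add_nonneg (Finset.sum_nonneg fun a _ ↦ ?_)
    (Finset.sum_nonneg fun a _ ↦ Finset.sum_nonneg fun b _ ↦ ?_)
  · have := hk'nonneg _ (hpos a)
    have := hk''nonneg _ (hpos a)
    have := hpos a
    positivity
  · split_ifs
    · exact mul_nonneg
        (hk'mono.mul_divDiff_add_nonneg (hpos a) (hpos b) (hpos b).le (hk'nonneg _ (hpos a)))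
        (Complex.mul_norm_sq_mul_norm_sq_add_mul_re_nonneg (Real.sqrt_nonneg _)
          (Real.sqrt_mul_le_add_div_two (hpos a).le (hpos b).le) _ _)
    · exact le_rfl

/-- Nonnegativity of the Higgs-field correction to the principal symbol of the
linearized real moment map equation, for a twice differentiable, convex,
non-decreasing function `k` on `(0,∞)`. -/
theorem symbol_correction_nonneg (k k' k'' : ℝ → ℝ)
    (hd1 : ∀ x ∈ Set.Ioi (0:ℝ), HasDerivAt k (k' x) x)
    (hd2 : ∀ x ∈ Set.Ioi (0:ℝ), HasDerivAt k' (k'' x) x)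
    (hconv : ConvexOn ℝ (Set.Ioi 0) k)
    (hmono : MonotoneOn k (Set.Ioi 0))
    (hk'nonneg : ∀ x ∈ Set.Ioi (0:ℝ), 0 ≤ k' x)
    (hk''nonneg : ∀ x ∈ Set.Ioi (0:ℝ), 0 ≤ k'' x)
    (n : ℕ) (lam : Fin n → ℝ) (hpos : ∀ a, 0 < lam a)
    (hinj : Function.Injective lam)
    (xi : Fin n → ℂ) :
    0 ≤ (∑ a, 2 * lam a * (lam a * k'' (lam a) + k' (lam a)) * ‖xi a‖ ^ 4)
      + ∑ a, ∑ b, (if a ≠ b then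
          (lam b * ((k' (lam a) - k' (lam b)) / (lam a - lam b)) + k' (lam a))
            * ((lam a + lam b) / 2 * (‖xi a‖ ^ 2 * ‖xi b‖ ^ 2)
              + Real.sqrt (lam a * lam b) * ((xi a) ^ 2 * (starRingEnd ℂ (xi b)) ^ 2).re)
        else 0) :=
  symbol_correction_nonneg_general k' k'' hd2 hk'nonneg hk''nonneg n lam hpos xi
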